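/- For every natural number n ≥ 39, every admissible multiplicity function m, every sum labeling ℓ of G(n,m), and every vertex v ∈ ψ(2): ℓ(v) ≠ 1. -/

import Mathlib

/-- `Sn n = {2,3,…,n} ∪ {n+2}`. -/
def Sn (n : ℕ) : Set ℕ := {k | (2 ≤ k ∧ k ≤ n) ∨ k = n + 2}

/-- `m` is an admissible multiplicity function for `Sn n`. -/
def Admissible (n : ℕ) (m : ℕ → ℕ) : Prop :=
  (∀ i ∈ Sn n, 2 * i ∈ Sn n → 2 ≤ m i) ∧
  (∀ i ∈ Sn n, 2 * i ∉ Sn n → m i = 1) ∧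
  (∀ i, i ∉ Sn n → m i = 0)

/-- The vertex set of `G(n,m)`: pairs `(i,j)` with `i ∈ Sn n` and `j < m i`. -/
def Vnm (n : ℕ) (m : ℕ → ℕ) : Set (ℕ × ℕ) := {p | p.1 ∈ Sn n ∧ p.2 < m p.1}

/-- Distinct vertices `u`, `v` of `G(n,m)` are adjacent iff `u.1 + v.1 ∈ Sn n`. -/
def AdjG (n : ℕ) (u v : ℕ × ℕ) : Prop := u ≠ v ∧ u.1 + v.1 ∈ Sn n

/-- `psi m i` is the set of vertices induced by the integer `i`. -/
def psi (m : ℕ → ℕ) (i : ℕ) : Set (ℕ × ℕ) := {p | p.1 = i ∧ p.2 < m i}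

/-- The set of proper terminals of a vertex `v` of `G(n,m)`. -/
def tau (n : ℕ) (m : ℕ → ℕ) (v : ℕ × ℕ) : Set (ℕ × ℕ) :=
  {w ∈ Vnm n m | w ≠ v ∧ v.1 + w.1 ∉ Sn n}

/-- A (possibly non-injective) sum labeling of the graph `G(n,m)`. -/
def IsSumLabelingG (n : ℕ) (m : ℕ → ℕ) (ℓ : ℕ × ℕ → ℕ) : Prop :=
  (∀ v ∈ Vnm n m, 1 ≤ ℓ v) ∧
  ∀ u ∈ Vnm n m, ∀ v ∈ Vnm n m, u ≠ v →
    (AdjG n u v ↔ ∃ w ∈ Vnm n m, ℓ u + ℓ v = ℓ w)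

/-!
Suppose a vertex `v` with coordinate `2` has label `1`. Every vertex except `b = (n-1,0)` and
`x = (n+2,0)` is adjacent to `v`, so every label `t ≥ 2` other than `ℓ b` and `ℓ x` is followed by
the label `t + 1`; in particular all of `[ℓ (3,0) + 1, ℓ b]` are labels. Vertices with equal labels
have the same neighbours, which makes the labels of `(c,0)`, `2 ≤ c ≤ n/2`, distinct. The largest
label sits on `x` alone, and the second largest either on `b` alone or on `z = (n,0)` with
`ℓ z + 1 = ℓ x`; in the latter case either `b` carries the third largest label or
`ℓ d + 2 = ℓ x` for `d = (n-2,0)`. In each case, which of the sums `ℓ b + ℓ w`, `ℓ z + ℓ w`,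
`ℓ d + ℓ w` are labels pins `ℓ (3,0)`, `ℓ b`, `ℓ z`, `ℓ d`, `ℓ x` down to a few possibilities.
The contradiction then comes from a value of `[ℓ (3,0) + 1, ℓ b]` that no vertex carries, from
five distinct labels of vertices with coordinate in `[5, n-3]` ("mid" vertices) confined to four
values, or from a sum of two labels of adjacent vertices exceeding `ℓ x`.

In names, `x`, `z`, `b`, `d` stand for these four vertices, the only ones with their coordinates,
and `label_three` for `ℓ (3,0)`.
-/

open Set

theorem Prod.ne_of_fst_ne {α β : Type*} {u w : α × β} (h : u.1 ≠ w.1) : u ≠ w :=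
  ne_of_apply_ne Prod.fst h

theorem mem_Sn {n k : ℕ} : k ∈ Sn n ↔ (2 ≤ k ∧ k ≤ n) ∨ k = n + 2 := Iff.rfl

theorem Vnm_finite (n : ℕ) (m : ℕ → ℕ) : (Vnm n m).Finite := by
  refine ((finite_Iic (n + 2)).prod (finite_Iio ((Finset.range (n + 3)).sup m))).subset ?_
  rintro ⟨i, j⟩ ⟨hi, hj⟩
  have hin : i ≤ n + 2 := by rw [mem_Sn] at hi; omega
  exact ⟨hin, hj.trans_le (Finset.le_sup (Finset.mem_range.2 (by omega)))⟩

theorem exists_max_label (n : ℕ) (m : ℕ → ℕ) (ℓ : ℕ × ℕ → ℕ) {P : ℕ × ℕ → Prop} {u : ℕ × ℕ}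
    (hu : u ∈ Vnm n m) (hPu : P u) : ∃ y ∈ Vnm n m, P y ∧ ∀ w ∈ Vnm n m, P w → ℓ w ≤ ℓ y := by
  obtain ⟨y, ⟨hy, hPy⟩, hmax⟩ := exists_max_image {w ∈ Vnm n m | P w} ℓ
    ((Vnm_finite n m).subset (sep_subset _ _)) ⟨u, hu, hPu⟩
  exact ⟨y, hy, hPy, fun w hw hPw => hmax w ⟨hw, hPw⟩⟩

namespace Admissible

variable {n : ℕ} {m : ℕ → ℕ} {i : ℕ}

theorem pos (hm : Admissible n m) (hi : i ∈ Sn n) : 0 < m i := by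
  by_cases h : 2 * i ∈ Sn n
  · exact two_pos.trans_le (hm.1 i hi h)
  · rw [hm.2.1 i hi h]
    exact one_pos

theorem mk_zero_mem (hm : Admissible n m) (hi : i ∈ Sn n) : (i, 0) ∈ Vnm n m :=
  ⟨hi, hm.pos hi⟩

theorem mk_one_mem (hm : Admissible n m) (hi : i ∈ Sn n) (h2i : 2 * i ∈ Sn n) :
    (i, 1) ∈ Vnm n m :=
  ⟨hi, hm.1 i hi h2i⟩

theorem eq_mk_zero (hm : Admissible n m) {u : ℕ × ℕ} (hu : u ∈ Vnm n m) (h : 2 * u.1 ∉ Sn n) :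
    u = (u.1, 0) := by
  have h1 := hm.2.1 _ hu.1 h
  have h2 := hu.2
  ext <;> simp only
  omega

end Admissible

namespace IsSumLabelingG

variable {n : ℕ} {m : ℕ → ℕ} {ℓ : ℕ × ℕ → ℕ} {u u' w : ℕ × ℕ}

theorem add_mem (hℓ : IsSumLabelingG n m ℓ) (hu : u ∈ Vnm n m) (hw : w ∈ Vnm n m)
    (hs : u.1 + w.1 ∈ Sn n) (hne : u ≠ w) : ℓ u + ℓ w ∈ ℓ '' Vnm n m := by
  obtain ⟨x, hx, h⟩ := (hℓ.2 u hu w hw hne).1 ⟨hne, hs⟩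
  exact ⟨x, hx, h.symm⟩

theorem add_notMem (hℓ : IsSumLabelingG n m ℓ) (hu : u ∈ Vnm n m) (hw : w ∈ Vnm n m)
    (hs : u.1 + w.1 ∉ Sn n) (hne : u ≠ w) : ℓ u + ℓ w ∉ ℓ '' Vnm n m := by
  rintro ⟨x, hx, h⟩
  exact hs ((hℓ.2 u hu w hw hne).2 ⟨x, hx, h.symm⟩).2

theorem label_ne_of_separated (hℓ : IsSumLabelingG n m ℓ) (hu : u ∈ Vnm n m)
    (hu' : u' ∈ Vnm n m) (hw : w ∈ Vnm n m) (hs : w.1 + u.1 ∈ Sn n) (hs' : w.1 + u'.1 ∉ Sn n)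
    (hne : w ≠ u) (hne' : w ≠ u') : ℓ u ≠ ℓ u' := fun h =>
  hℓ.add_notMem hw hu' hs' hne' (h ▸ hℓ.add_mem hw hu hs hne)

end IsSumLabelingG

def SecondAtB (n : ℕ) (m : ℕ → ℕ) (ℓ : ℕ × ℕ → ℕ) : Prop :=
  ∀ u ∈ Vnm n m, u ≠ (n + 2, 0) → u ≠ (n - 1, 0) → ℓ u < ℓ (n - 1, 0)

theorem SecondAtB.le_b_or_eq_x {n : ℕ} {m : ℕ → ℕ} {ℓ : ℕ × ℕ → ℕ} (hB : SecondAtB n m ℓ)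
    {t : ℕ} (ht : t ∈ ℓ '' Vnm n m) : t ≤ ℓ (n - 1, 0) ∨ t = ℓ (n + 2, 0) := by
  obtain ⟨u, hu, rfl⟩ := ht
  by_cases hux : u = (n + 2, 0)
  · exact Or.inr (by rw [hux])
  by_cases hub : u = (n - 1, 0)
  · exact Or.inl (by rw [hub])
  exact Or.inl (hB u hu hux hub).le

def SecondAtZ (n : ℕ) (m : ℕ → ℕ) (ℓ : ℕ × ℕ → ℕ) : Prop :=
  ℓ (n, 0) + 1 = ℓ (n + 2, 0) ∧ ∀ u ∈ Vnm n m, u ≠ (n + 2, 0) → ℓ u ≤ ℓ (n, 0)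

def ThirdAtB (n : ℕ) (m : ℕ → ℕ) (ℓ : ℕ × ℕ → ℕ) : Prop :=
  ∀ u ∈ Vnm n m, u ≠ (n + 2, 0) → u ≠ (n, 0) → u ≠ (n - 1, 0) → ℓ u < ℓ (n - 1, 0)

theorem ThirdAtB.le_b_or_eq {n : ℕ} {m : ℕ → ℕ} {ℓ : ℕ × ℕ → ℕ} (hT : ThirdAtB n m ℓ)
    {t : ℕ} (ht : t ∈ ℓ '' Vnm n m) :
    t ≤ ℓ (n - 1, 0) ∨ t = ℓ (n, 0) ∨ t = ℓ (n + 2, 0) := by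
  obtain ⟨u, hu, rfl⟩ := ht
  by_cases hux : u = (n + 2, 0)
  · exact Or.inr (Or.inr (by rw [hux]))
  by_cases huz : u = (n, 0)
  · exact Or.inr (Or.inl (by rw [huz]))
  by_cases hub : u = (n - 1, 0)
  · exact Or.inl (by rw [hub])
  exact Or.inl (hT u hu hux huz hub).le

structure Counterexample (n : ℕ) (m : ℕ → ℕ) (ℓ : ℕ × ℕ → ℕ) (v : ℕ × ℕ) : Prop where
  le_n : 39 ≤ n
  admissible : Admissible n m
  sumLabeling : IsSumLabelingG n m ℓ
  v_mem : v ∈ Vnm n m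
  v_fst : v.1 = 2
  label_v : ℓ v = 1

namespace Counterexample

variable {n : ℕ} {m : ℕ → ℕ} {ℓ : ℕ × ℕ → ℕ} {v u w y : ℕ × ℕ}

theorem mk_mem (C : Counterexample n m ℓ v) {c : ℕ} (h2 : 2 ≤ c) (hc : c ≤ n) :
    (c, 0) ∈ Vnm n m :=
  C.admissible.mk_zero_mem (Or.inl ⟨h2, hc⟩)

theorem x_mem (C : Counterexample n m ℓ v) : (n + 2, 0) ∈ Vnm n m :=
  C.admissible.mk_zero_mem (Or.inr rfl)

theorem mk_one_mem (C : Counterexample n m ℓ v) {c : ℕ} (h2 : 2 ≤ c) (hc : 2 * c ≤ n) :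
    (c, 1) ∈ Vnm n m :=
  C.admissible.mk_one_mem (Or.inl ⟨h2, by omega⟩) (Or.inl ⟨by omega, hc⟩)

theorem eq_mk_zero (C : Counterexample n m ℓ v) (hu : u ∈ Vnm n m) {c : ℕ} (hc : u.1 = c)
    (h : n - 2 ≤ c) : u = (c, 0) := by
  have := C.le_n
  rw [← hc]
  exact C.admissible.eq_mk_zero hu (by rw [mem_Sn]; omega)

theorem fst_cases (C : Counterexample n m ℓ v) (hu : u ∈ Vnm n m) :
    u.1 = 2 ∨ u.1 = 3 ∨ u.1 = 4 ∨ (5 ≤ u.1 ∧ u.1 + 3 ≤ n) ∨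
      u = (n - 2, 0) ∨ u = (n - 1, 0) ∨ u = (n, 0) ∨ u = (n + 2, 0) := by
  have := C.le_n
  rcases mem_Sn.1 hu.1 with ⟨h2, hn⟩ | hx
  · by_cases hlow : u.1 + 3 ≤ n
    · omega
    · have : u.1 = n - 2 ∨ u.1 = n - 1 ∨ u.1 = n := by omega
      rcases this with h | h | h <;> simp [C.eq_mk_zero hu h (by omega)]
  · simp [C.eq_mk_zero hu hx (by omega)]

theorem add_mem (C : Counterexample n m ℓ v) (hu : u ∈ Vnm n m) (hw : w ∈ Vnm n m)
    (hs : u.1 + w.1 ∈ Sn n) (hne : u ≠ w) : ℓ u + ℓ w ∈ ℓ '' Vnm n m :=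
  C.sumLabeling.add_mem hu hw hs hne

theorem add_notMem (C : Counterexample n m ℓ v) (hu : u ∈ Vnm n m) (hw : w ∈ Vnm n m)
    (hs : u.1 + w.1 ∉ Sn n) (hne : u ≠ w) : ℓ u + ℓ w ∉ ℓ '' Vnm n m :=
  C.sumLabeling.add_notMem hu hw hs hne

theorem one_le_label (C : Counterexample n m ℓ v) (hu : u ∈ Vnm n m) : 1 ≤ ℓ u :=
  C.sumLabeling.1 u hu

theorem label_ne_of_separated (C : Counterexample n m ℓ v) {u u' : ℕ × ℕ} (hu : u ∈ Vnm n m)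
    (hu' : u' ∈ Vnm n m) {c : ℕ} (h2 : 2 ≤ c) (hcn : c ≤ n) (hs : c + u.1 ∈ Sn n)
    (hs' : c + u'.1 ∉ Sn n) (hcu : c ≠ u.1) (hcu' : c ≠ u'.1) : ℓ u ≠ ℓ u' :=
  C.sumLabeling.label_ne_of_separated hu hu' (C.mk_mem h2 hcn) hs hs'
    (Prod.ne_of_fst_ne hcu) (Prod.ne_of_fst_ne hcu')

theorem add_ne_label (C : Counterexample n m ℓ v) (hu : u ∈ Vnm n m) (hw : w ∈ Vnm n m)
    (hs : u.1 + w.1 ∉ Sn n) (hne : u ≠ w) (hy : y ∈ Vnm n m) : ℓ u + ℓ w ≠ ℓ y :=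
  fun h => C.add_notMem hu hw hs hne ⟨y, hy, h.symm⟩

theorem two_le_label (C : Counterexample n m ℓ v) (hu : u ∈ Vnm n m) (h3 : 3 ≤ u.1)
    (hun : u.1 ≤ n) : 2 ≤ ℓ u := by
  have := C.le_n
  have := C.v_fst
  suffices ℓ v ≠ ℓ u by
    have := C.one_le_label hu
    have := C.label_v
    omega
  by_cases hlt : u.1 < n
  · exact C.label_ne_of_separated C.v_mem hu (c := n) (by omega) le_rfl
      (by rw [mem_Sn]; omega) (by rw [mem_Sn]; omega) (by omega) (by omega)
  · exact C.label_ne_of_separated C.v_mem hu (c := n - 2) (by omega) (by omega)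
      (by rw [mem_Sn]; omega) (by rw [mem_Sn]; omega) (by omega) (by omega)

theorem label_add_one_mem (C : Counterexample n m ℓ v) (hu : u ∈ Vnm n m)
    (hs : u.1 + 2 ∈ Sn n) (h2 : 2 ≤ ℓ u) : ℓ u + 1 ∈ ℓ '' Vnm n m := by
  have huv : u ≠ v := by
    rintro rfl
    have := C.label_v
    omega
  have := C.add_mem hu C.v_mem (by rwa [C.v_fst]) huv
  rwa [C.label_v] at this

theorem label_b_add_one_notMem (C : Counterexample n m ℓ v) :
    ℓ (n - 1, 0) + 1 ∉ ℓ '' Vnm n m := by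
  have := C.le_n
  have := C.v_fst
  have := C.add_notMem (C.mk_mem (c := n - 1) (by omega) (by omega)) C.v_mem
    (by rw [mem_Sn]; omega) (Prod.ne_of_fst_ne (by omega))
  rwa [C.label_v] at this

theorem eq_x_of_forall_label_le (C : Counterexample n m ℓ v) (hy : y ∈ Vnm n m)
    (hmax : ∀ u ∈ Vnm n m, ℓ u ≤ ℓ y) : y = (n + 2, 0) := by
  have := C.le_n
  have h3 := C.mk_mem (c := 3) (by norm_num) (by omega)
  have hy2 : 2 ≤ ℓ y := (C.two_le_label h3 (by norm_num) (by omega)).trans (hmax _ h3)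
  have := C.one_le_label h3
  rcases mem_Sn.1 hy.1 with hyn | hyx
  · exfalso
    obtain ⟨w, hw, hwy⟩ : ∃ w ∈ Vnm n m, ℓ y < ℓ w := by
      by_cases hyb : y.1 = n - 1
      · rw [C.eq_mk_zero hy hyb (by omega)] at hy2 ⊢
        obtain ⟨w, hw, hwe⟩ := C.add_mem (C.mk_mem (c := n - 1) (by omega) (by omega)) h3
          (by rw [mem_Sn]; omega) (Prod.ne_of_fst_ne (by omega))
        exact ⟨w, hw, by omega⟩
      · obtain ⟨w, hw, hwe⟩ := C.label_add_one_mem hy (by rw [mem_Sn]; omega) hy2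
        exact ⟨w, hw, by omega⟩
    exact absurd (hmax w hw) (by omega)
  · exact C.eq_mk_zero hy hyx (by omega)

theorem label_lt_x (C : Counterexample n m ℓ v) (hu : u ∈ Vnm n m) (hux : u ≠ (n + 2, 0)) :
    ℓ u < ℓ (n + 2, 0) := by
  obtain ⟨y, hy, -, hmax⟩ := exists_max_label n m ℓ (P := fun _ => True) C.v_mem trivial
  obtain rfl := C.eq_x_of_forall_label_le hy fun w hw => hmax w hw trivial
  refine (hmax u hu trivial).lt_of_ne fun h => hux ?_
  exact C.eq_x_of_forall_label_le hu fun w hw => h ▸ hmax w hw trivial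

theorem le_label_x (C : Counterexample n m ℓ v) {t : ℕ} (ht : t ∈ ℓ '' Vnm n m) :
    t ≤ ℓ (n + 2, 0) := by
  obtain ⟨u, hu, rfl⟩ := ht
  by_cases hux : u = (n + 2, 0)
  · rw [hux]
  · exact (C.label_lt_x hu hux).le

theorem label_b_lt_x (C : Counterexample n m ℓ v) : ℓ (n - 1, 0) < ℓ (n + 2, 0) := by
  have := C.le_n
  exact C.label_lt_x (C.mk_mem (by omega) (by omega)) (Prod.ne_of_fst_ne (by omega))

theorem succ_mem (C : Counterexample n m ℓ v) {t : ℕ} (ht : t ∈ ℓ '' Vnm n m) (h2 : 2 ≤ t)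
    (hb : t ≠ ℓ (n - 1, 0)) (hx : t ≠ ℓ (n + 2, 0)) : t + 1 ∈ ℓ '' Vnm n m := by
  obtain ⟨w, hw, rfl⟩ := ht
  refine C.label_add_one_mem hw ?_ h2
  have := C.le_n
  rw [mem_Sn]
  rcases C.fst_cases hw with h | h | h | h | rfl | rfl | rfl | rfl <;> omega

theorem Icc_subset_labels (C : Counterexample n m ℓ v) {t : ℕ} (ht : t ∈ ℓ '' Vnm n m)
    (h2 : 2 ≤ t) : Icc t (ℓ (n - 1, 0)) ⊆ ℓ '' Vnm n m := by
  have := C.label_b_lt_x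
  rintro r ⟨htr, hrb⟩
  induction r, htr using Nat.le_induction with
  | base => exact ht
  | succ r htr ih => exact C.succ_mem (ih (by omega)) (by omega) (by omega) (by omega)

theorem Icc_label_three_subset (C : Counterexample n m ℓ v) :
    Icc (ℓ (3, 0) + 1) (ℓ (n - 1, 0)) ⊆ ℓ '' Vnm n m := by
  have := C.le_n
  have h3 := C.mk_mem (c := 3) (by norm_num) (by omega)
  have hA := C.two_le_label h3 (by norm_num) (by omega)
  exact C.Icc_subset_labels (C.label_add_one_mem h3 (by rw [mem_Sn]; omega) hA) (by omega)

theorem b_lt_add_label_three (C : Counterexample n m ℓ v) (hu : u ∈ Vnm n m)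
    (hs : u.1 + 3 ∉ Sn n) : ℓ (n - 1, 0) < ℓ u + ℓ (3, 0) := by
  have := C.le_n
  have hu3 : u.1 ≠ 3 := by
    rintro h
    rw [h, mem_Sn] at hs
    omega
  by_contra h
  exact C.add_notMem hu (C.mk_mem (c := 3) (by norm_num) (by omega)) hs (Prod.ne_of_fst_ne hu3)
    (C.Icc_label_three_subset ⟨by have := C.one_le_label hu; omega, by omega⟩)

theorem label_z_ne_d (C : Counterexample n m ℓ v) : ℓ (n, 0) ≠ ℓ (n - 2, 0) := by
  have := C.le_n
  exact (C.label_ne_of_separated (C.mk_mem (c := n - 2) (by omega) (by omega))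
    (C.mk_mem (c := n) (by omega) le_rfl) (c := 4) (by norm_num) (by omega)
    (by rw [mem_Sn]; omega) (by rw [mem_Sn]; omega) (by omega) (by omega)).symm

theorem label_ne_of_fst_three (C : Counterexample n m ℓ v) (hw : w ∈ Vnm n m) (hw3 : w.1 = 3)
    (hu : u ∈ Vnm n m) (hu5 : 5 ≤ u.1) (hun : u.1 + 3 ≤ n) : ℓ w ≠ ℓ u := by
  have := C.le_n
  exact C.label_ne_of_separated hw hu (c := n - 1) (by omega) (by omega)
    (by rw [mem_Sn]; omega) (by rw [mem_Sn]; omega) (by omega) (by omega)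

theorem label_injOn (C : Counterexample n m ℓ v) :
    InjOn (fun c => ℓ (c, 0)) (Icc 2 (n / 2)) := by
  have := C.le_n
  suffices h : ∀ c ∈ Icc 2 (n / 2), ∀ c' ∈ Icc 2 (n / 2), c < c' → ℓ (c, 0) ≠ ℓ (c', 0) by
    intro c hc c' hc' he
    by_contra hne
    rcases Nat.lt_or_gt_of_ne hne with hlt | hlt
    · exact h c hc c' hc' hlt he
    · exact h c' hc' c hc hlt he.symm
  rintro c ⟨hc2, hcn⟩ c' ⟨hc2', hcn'⟩ hlt
  exact C.label_ne_of_separated (C.mk_mem hc2 (by omega)) (C.mk_mem hc2' (by omega))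
    (c := n + 1 - c') (by omega) (by omega) (by rw [mem_Sn]; omega) (by rw [mem_Sn]; omega)
    (by omega) (by omega)

theorem exists_mid_label_notMem (C : Counterexample n m ℓ v) {t : Finset ℕ}
    (ht : t.card ≤ 4) : ∃ u ∈ Vnm n m, 5 ≤ u.1 ∧ u.1 + 3 ≤ n ∧ ℓ u ∉ t := by
  have := C.le_n
  by_contra! h
  have hmaps : MapsTo (fun c => ℓ (c, 0)) (Finset.Icc 10 14 : Finset ℕ) t := by
    intro c hc
    simp only [Finset.coe_Icc, mem_Icc] at hc
    exact h _ (C.mk_mem (by omega) (by omega)) (by simp only; omega) (by simp only; omega)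
  have := Finset.card_le_card_of_injOn _ hmaps (C.label_injOn.mono fun c hc => by
    simp only [Finset.coe_Icc, mem_Icc] at hc ⊢
    omega)
  simp only [Nat.card_Icc] at this
  omega

theorem exists_adj_fst_three (C : Counterexample n m ℓ v) (hy : y ∈ Vnm n m)
    (hyn : y.1 + 3 ≤ n) : ∃ w ∈ Vnm n m, w.1 = 3 ∧ y.1 + w.1 ∈ Sn n ∧ w ≠ y := by
  have := C.le_n
  have := mem_Sn.1 hy.1
  by_cases h : y = (3, 0)
  · exact ⟨(3, 1), C.mk_one_mem (by norm_num) (by omega), rfl, by rw [mem_Sn]; omega,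
      by simp [h]⟩
  · exact ⟨(3, 0), C.mk_mem (by norm_num) (by omega), rfl, by rw [mem_Sn]; omega, Ne.symm h⟩

theorem exists_adj_mid (C : Counterexample n m ℓ v) (hy3 : 3 ≤ y.1)
    (hyn : y.1 + 3 ≤ n) :
    ∃ u ∈ Vnm n m, 5 ≤ u.1 ∧ u.1 + 3 ≤ n ∧ y.1 + u.1 ∈ Sn n ∧ u ≠ y := by
  have := C.le_n
  obtain ⟨c, hc5, hcn, hs, hcy⟩ : ∃ c, 5 ≤ c ∧ c + 3 ≤ n ∧ y.1 + c ∈ Sn n ∧ c ≠ y.1 := by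
    by_cases hsmall : y.1 + 6 ≤ n
    · by_cases h5 : y.1 = 5
      · exact ⟨6, by norm_num, by omega, by rw [mem_Sn]; omega, by omega⟩
      · exact ⟨5, le_rfl, by omega, by rw [mem_Sn]; omega, by omega⟩
    · exact ⟨n + 2 - y.1, by omega, by omega, by rw [mem_Sn]; omega, by omega⟩
  exact ⟨(c, 0), C.mk_mem (by omega) (by omega), hc5, hcn, hs, Prod.ne_of_fst_ne hcy⟩

theorem label_add_lt_x (C : Counterexample n m ℓ v) (hy : y ∈ Vnm n m) (hy3 : 3 ≤ y.1)
    (hyn : y.1 + 3 ≤ n) {k : ℕ} (hk3 : ∀ w ∈ Vnm n m, w.1 = 3 → k ≤ ℓ w)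
    (hk5 : ∀ u ∈ Vnm n m, 5 ≤ u.1 → u.1 + 3 ≤ n → k ≤ ℓ u) : ℓ y + k < ℓ (n + 2, 0) := by
  obtain ⟨w, hw, hw3, hsw, hwy⟩ := C.exists_adj_fst_three hy hyn
  obtain ⟨u, hu, hu5, hun, hsu, huy⟩ := C.exists_adj_mid hy3 hyn
  have := C.label_ne_of_fst_three hw hw3 hu hu5 hun
  have := C.le_label_x (C.add_mem hy hw hsw hwy.symm)
  have := C.le_label_x (C.add_mem hy hu hsu huy.symm)
  have := hk3 w hw hw3
  have := hk5 u hu hu5 hun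
  omega

theorem label_add_two_le_x (C : Counterexample n m ℓ v) (hy : y ∈ Vnm n m) (hyn : y.1 + 2 ≤ n) :
    ℓ y + 2 ≤ ℓ (n + 2, 0) := by
  have := C.le_n
  obtain ⟨w, hw, hsw, hwy, hw2⟩ : ∃ w ∈ Vnm n m, y.1 + w.1 ∈ Sn n ∧ w ≠ y ∧ 2 ≤ ℓ w := by
    by_cases h : y.1 + 3 ≤ n
    · obtain ⟨w, hw, hw3, hs, hne⟩ := C.exists_adj_fst_three hy h
      exact ⟨w, hw, hs, hne, C.two_le_label hw (by omega) (by omega)⟩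
    · have h4 := C.mk_mem (c := 4) (by norm_num) (by omega)
      exact ⟨(4, 0), h4, by rw [mem_Sn]; omega, Prod.ne_of_fst_ne (by omega),
        C.two_le_label h4 (by norm_num) (by omega)⟩
  have := C.le_label_x (C.add_mem hy hw hsw hwy.symm)
  omega

theorem secondAtB_or_secondAtZ (C : Counterexample n m ℓ v) :
    SecondAtB n m ℓ ∨ SecondAtZ n m ℓ := by
  have := C.le_n
  have h3 := C.mk_mem (c := 3) (by norm_num) (by omega)
  have h3x : ((3, 0) : ℕ × ℕ) ≠ (n + 2, 0) := Prod.ne_of_fst_ne (by omega)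
  obtain ⟨y, hy, hyx, hmax⟩ :=
    exists_max_label n m ℓ (P := fun u => u ≠ (n + 2, 0)) h3 h3x
  have hy2 : 2 ≤ ℓ y := (C.two_le_label h3 (by norm_num) (by omega)).trans (hmax _ h3 h3x)
  by_cases hex : ∃ u ∈ Vnm n m, u ≠ (n + 2, 0) ∧ u ≠ (n - 1, 0) ∧ ℓ u = ℓ y
  · right
    obtain ⟨u, hu, hux, hub, hue⟩ := hex
    have hs : u.1 + 2 ∈ Sn n := by
      have := mem_Sn.1 hu.1
      have : u.1 ≠ n - 1 := fun h => hub (C.eq_mk_zero hu h (by omega))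
      have : u.1 ≠ n + 2 := fun h => hux (C.eq_mk_zero hu h (by omega))
      rw [mem_Sn]
      omega
    -- the successor of the second largest label can only be the largest one
    have hsucc : ℓ u + 1 = ℓ (n + 2, 0) := by
      obtain ⟨w, hw, hwe⟩ := C.label_add_one_mem hu hs (hue ▸ hy2)
      by_cases hwx : w = (n + 2, 0)
      · rw [← hwx, hwe]
      · have := hmax w hw hwx
        omega
    have hun : u.1 = n := by
      have : ¬ u.1 + 2 ≤ n := fun h => by
        have := C.label_add_two_le_x hu h
        omega
      rw [mem_Sn] at hs
      omega
    obtain rfl := C.eq_mk_zero hu hun (by omega)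
    exact ⟨hsucc, fun w hw hwx => hue ▸ hmax w hw hwx⟩
  · left
    push Not at hex
    obtain rfl : y = (n - 1, 0) := by
      by_contra h
      exact hex y hy hyx h rfl
    exact fun u hu hux hub => (hmax u hu hux).lt_of_ne (hex u hu hux hub)

theorem label_fst_two_eq_one (C : Counterexample n m ℓ v)
    (hzx : ℓ (n, 0) + 1 = ℓ (n + 2, 0)) (hu : u ∈ Vnm n m) (hu2 : u.1 = 2) : ℓ u = 1 := by
  have := C.le_n
  have := C.le_label_x (C.add_mem (C.mk_mem (c := n) (by omega) le_rfl) hu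
    (by rw [mem_Sn]; omega) (Prod.ne_of_fst_ne (by omega)))
  have := C.one_le_label hu
  omega

/-! ### `b` carries the second largest label -/

theorem b_add_label_fst_three_of_secondAtB (C : Counterexample n m ℓ v) (hB : SecondAtB n m ℓ)
    (hw : w ∈ Vnm n m) (hw3 : w.1 = 3) : ℓ (n - 1, 0) + ℓ w = ℓ (n + 2, 0) := by
  have := C.le_n
  have := C.one_le_label hw
  have := hB.le_b_or_eq_x (C.add_mem (C.mk_mem (c := n - 1) (by omega) (by omega))
    hw (by rw [mem_Sn]; omega) (Prod.ne_of_fst_ne (by omega)))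
  omega

theorem two_mul_label_three_le_of_secondAtB (C : Counterexample n m ℓ v)
    (hB : SecondAtB n m ℓ) : 2 * ℓ (3, 0) ≤ ℓ (n - 1, 0) := by
  have := C.le_n
  have h30 := C.mk_mem (c := 3) (by norm_num) (by omega)
  have h31 := C.mk_one_mem (c := 3) (by norm_num) (by omega)
  have := C.b_add_label_fst_three_of_secondAtB hB h30 rfl
  have := C.b_add_label_fst_three_of_secondAtB hB h31 rfl
  have := hB _ h30 (Prod.ne_of_fst_ne (by omega)) (Prod.ne_of_fst_ne (by omega))
  have := hB.le_b_or_eq_x (C.add_mem h30 h31 (by rw [mem_Sn]; omega) (by simp))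
  omega

theorem label_add_label_three_le_of_secondAtB (C : Counterexample n m ℓ v)
    (hB : SecondAtB n m ℓ) (hu : u ∈ Vnm n m) (hun : u.1 + 3 ≤ n) :
    ℓ u + ℓ (3, 0) ≤ ℓ (n - 1, 0) := by
  have := C.le_n
  obtain ⟨w, hw, hw3, hs, hwu⟩ := C.exists_adj_fst_three hu hun
  have := C.b_add_label_fst_three_of_secondAtB hB hw hw3
  have := C.b_add_label_fst_three_of_secondAtB hB (C.mk_mem (c := 3) (by norm_num) (by omega)) rfl
  have := hB u hu (Prod.ne_of_fst_ne (by omega)) (Prod.ne_of_fst_ne (by omega))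
  have := hB.le_b_or_eq_x (C.add_mem hu hw hs hwu.symm)
  omega

theorem eq_z_or_d_of_secondAtB (C : Counterexample n m ℓ v) (hB : SecondAtB n m ℓ) {t : ℕ}
    (ht : t ∈ ℓ '' Vnm n m) (hbt : ℓ (n - 1, 0) < t + ℓ (3, 0)) (htb : t < ℓ (n - 1, 0)) :
    t = ℓ (n, 0) ∨ t = ℓ (n - 2, 0) := by
  have := C.le_n
  have := C.label_b_lt_x
  obtain ⟨w, hw, rfl⟩ := ht
  by_cases hwn : w.1 + 3 ≤ n
  · have := C.label_add_label_three_le_of_secondAtB hB hw hwn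
    omega
  rcases C.fst_cases hw with h | h | h | h | rfl | rfl | rfl | rfl <;> omega

theorem label_three_le_three_of_secondAtB (C : Counterexample n m ℓ v) (hB : SecondAtB n m ℓ) :
    ℓ (3, 0) ≤ 3 := by
  by_contra h
  have := C.two_mul_label_three_le_of_secondAtB hB
  have hI := C.Icc_label_three_subset
  have hzd : ∀ k, 1 ≤ k → k ≤ 3 →
      ℓ (n - 1, 0) - k = ℓ (n, 0) ∨ ℓ (n - 1, 0) - k = ℓ (n - 2, 0) := fun k hk1 hk3 =>
    C.eq_z_or_d_of_secondAtB hB (hI ⟨by omega, by omega⟩) (by omega) (by omega)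
  have := hzd 1 le_rfl (by norm_num)
  have := hzd 2 (by norm_num) (by norm_num)
  have := hzd 3 (by norm_num) le_rfl
  omega

theorem label_z_d_of_secondAtB (C : Counterexample n m ℓ v) (hB : SecondAtB n m ℓ) :
    ℓ (3, 0) = 3 ∧ (ℓ (n, 0) + 1 = ℓ (n - 1, 0) ∧ ℓ (n - 2, 0) + 2 = ℓ (n - 1, 0) ∨
      ℓ (n, 0) + 2 = ℓ (n - 1, 0) ∧ ℓ (n - 2, 0) + 1 = ℓ (n - 1, 0)) := by
  have := C.le_n
  have hzV := C.mk_mem (c := n) (by omega) le_rfl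
  have hdV := C.mk_mem (c := n - 2) (by omega) (by omega)
  have := C.two_le_label (C.mk_mem (c := 3) (by norm_num) (by omega)) (by norm_num) (by omega)
  have := C.label_three_le_three_of_secondAtB hB
  have := C.b_lt_add_label_three hzV (by rw [mem_Sn]; omega)
  have := C.b_lt_add_label_three hdV (by rw [mem_Sn]; omega)
  have := hB _ hzV (Prod.ne_of_fst_ne (by omega)) (Prod.ne_of_fst_ne (by omega))
  have := hB _ hdV (Prod.ne_of_fst_ne (by omega)) (Prod.ne_of_fst_ne (by omega))
  have := C.label_z_ne_d
  omega

theorem label_fst_two_of_secondAtB (C : Counterexample n m ℓ v) (hB : SecondAtB n m ℓ)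
    (hu : u ∈ Vnm n m) (hu2 : u.1 = 2) : ℓ u = 1 := by
  have := C.le_n
  have := C.label_z_d_of_secondAtB hB
  have := C.b_add_label_fst_three_of_secondAtB hB (C.mk_mem (c := 3) (by norm_num) (by omega)) rfl
  have := hB.le_b_or_eq_x (C.add_mem (C.mk_mem (c := n) (by omega) le_rfl) hu
    (by rw [mem_Sn]; omega) (Prod.ne_of_fst_ne (by omega)))
  have := hB.le_b_or_eq_x (C.add_mem (C.mk_mem (c := n - 2) (by omega) (by omega)) hu
    (by rw [mem_Sn]; omega) (Prod.ne_of_fst_ne (by omega)))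
  have := C.one_le_label hu
  omega

theorem false_of_secondAtB_of_z_add_one_eq_b (C : Counterexample n m ℓ v) (hB : SecondAtB n m ℓ)
    (hz : ℓ (n, 0) + 1 = ℓ (n - 1, 0)) : False := by
  have := C.le_n
  have h30 := C.mk_mem (c := 3) (by norm_num) (by omega)
  have hzV := C.mk_mem (c := n) (by omega) le_rfl
  have hdV := C.mk_mem (c := n - 2) (by omega) (by omega)
  have := C.label_z_d_of_secondAtB hB
  have hx := C.b_add_label_fst_three_of_secondAtB hB h30 rfl
  have := C.two_mul_label_three_le_of_secondAtB hB
  have := C.add_ne_label hzV hdV (by rw [mem_Sn]; omega) (Prod.ne_of_fst_ne (by omega)) C.x_mem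
  have hc4 : ∀ u ∈ Vnm n m, u.1 = 4 → ℓ u = 5 := by
    intro u hu hu4
    have := C.two_le_label hu (by omega) (by omega)
    have := hB.le_b_or_eq_x
      (C.add_mem hdV hu (by rw [mem_Sn]; omega) (Prod.ne_of_fst_ne (by omega)))
    -- `(n - 3, 0)` is not adjacent to `u`, so `ℓ u = 2` would put `ℓ (n - 3, 0) + 2` outside the
    -- labels, although it lies in `[ℓ (3, 0) + 1, ℓ (n - 1, 0)]`
    have heV := C.mk_mem (c := n - 3) (by omega) (by omega)
    have := C.label_add_label_three_le_of_secondAtB hB heV (by omega)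
    have := C.two_le_label heV (by omega) (by omega)
    have hu2 : ℓ u ≠ 2 := fun h => C.add_notMem heV hu (by rw [mem_Sn]; omega)
      (Prod.ne_of_fst_ne (by omega))
      (by rw [h]; exact C.Icc_label_three_subset ⟨by omega, by omega⟩)
    omega
  have h4 : 4 ∈ ℓ '' Vnm n m := C.Icc_label_three_subset ⟨by omega, by omega⟩
  obtain ⟨w, hw, hw4⟩ := h4
  rcases C.fst_cases hw with h | h | h | h | rfl | rfl | rfl | rfl
  · have := C.label_fst_two_of_secondAtB hB hw h
    omega
  · have := C.b_add_label_fst_three_of_secondAtB hB hw h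
    omega
  · have := hc4 w hw h
    omega
  · have := C.add_ne_label hzV hw (by rw [mem_Sn]; omega) (Prod.ne_of_fst_ne (by omega)) C.x_mem
    omega
  all_goals omega

theorem false_of_secondAtB_of_d_add_one_eq_b (C : Counterexample n m ℓ v) (hB : SecondAtB n m ℓ)
    (hd : ℓ (n - 2, 0) + 1 = ℓ (n - 1, 0)) : False := by
  have := C.le_n
  have h30 := C.mk_mem (c := 3) (by norm_num) (by omega)
  have hzV := C.mk_mem (c := n) (by omega) le_rfl
  have hdV := C.mk_mem (c := n - 2) (by omega) (by omega)
  have hbV := C.mk_mem (c := n - 1) (by omega) (by omega)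
  have := C.label_z_d_of_secondAtB hB
  have hx := C.b_add_label_fst_three_of_secondAtB hB h30 rfl
  have hc4 : ∀ u ∈ Vnm n m, u.1 = 4 → ℓ u = 4 := by
    intro u hu hu4
    have := C.two_le_label hu (by omega) (by omega)
    have := hB.le_b_or_eq_x
      (C.add_mem hdV hu (by rw [mem_Sn]; omega) (Prod.ne_of_fst_ne (by omega)))
    omega
  have h4V := C.mk_mem (c := 4) (by norm_num) (by omega)
  have := hc4 _ h4V rfl
  have := C.label_add_label_three_le_of_secondAtB hB h4V (by omega)
  have h5 : 5 ∈ ℓ '' Vnm n m := C.Icc_label_three_subset ⟨by omega, by omega⟩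
  obtain ⟨w, hw, hw5⟩ := h5
  rcases C.fst_cases hw with h | h | h | h | rfl | rfl | rfl | rfl
  · have := C.label_fst_two_of_secondAtB hB hw h
    omega
  · have := C.b_add_label_fst_three_of_secondAtB hB hw h
    omega
  · have := hc4 w hw h
    omega
  · have := C.add_ne_label hzV hw (by rw [mem_Sn]; omega) (Prod.ne_of_fst_ne (by omega)) C.x_mem
    omega
  · omega
  · omega
  · -- `ℓ (n - 1, 0) = 7` forces the label `3` on every vertex with coordinate in `[5, n - 3]`
    have hmid : ∀ u ∈ Vnm n m, 5 ≤ u.1 → u.1 + 3 ≤ n → ℓ u = 3 := by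
      intro u hu hu5 hun
      have := C.two_le_label hu (by omega) (by omega)
      have := C.label_add_label_three_le_of_secondAtB hB hu hun
      have := C.add_ne_label hw hu (by rw [mem_Sn]; omega) (Prod.ne_of_fst_ne (by omega)) hbV
      have := C.add_ne_label hdV hu (by rw [mem_Sn]; omega) (Prod.ne_of_fst_ne (by omega)) C.x_mem
      omega
    obtain ⟨u, hu, hu5, hun, hu3⟩ := C.exists_mid_label_notMem (t := {3}) (by simp)
    exact hu3 (by simp [hmid u hu hu5 hun])
  · omega

theorem false_of_secondAtB (C : Counterexample n m ℓ v) (hB : SecondAtB n m ℓ) : False := by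
  rcases (C.label_z_d_of_secondAtB hB).2 with ⟨hz, -⟩ | ⟨-, hd⟩
  · exact C.false_of_secondAtB_of_z_add_one_eq_b hB hz
  · exact C.false_of_secondAtB_of_d_add_one_eq_b hB hd

/-! ### `z` carries the second largest label -/

theorem b_add_three_le_x_of_secondAtZ (C : Counterexample n m ℓ v) (hZ : SecondAtZ n m ℓ) :
    ℓ (n - 1, 0) + 3 ≤ ℓ (n + 2, 0) := by
  have := C.le_n
  have := hZ.1
  have := hZ.2 _ (C.mk_mem (c := n - 1) (by omega) (by omega)) (Prod.ne_of_fst_ne (by omega))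
  have hx : ℓ (n + 2, 0) ≠ ℓ (n - 1, 0) + 1 := fun h =>
    C.label_b_add_one_notMem ⟨_, C.x_mem, h⟩
  have hz : ℓ (n, 0) ≠ ℓ (n - 1, 0) + 1 := fun h =>
    C.label_b_add_one_notMem ⟨_, C.mk_mem (c := n) (by omega) le_rfl, h⟩
  omega

theorem thirdAtB_or_d_add_two_eq_x (C : Counterexample n m ℓ v) (hZ : SecondAtZ n m ℓ) :
    ThirdAtB n m ℓ ∨ ℓ (n - 2, 0) + 2 = ℓ (n + 2, 0) := by
  have := C.le_n
  have h3 := C.mk_mem (c := 3) (by norm_num) (by omega)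
  obtain ⟨y, hy, ⟨hy3, hyn⟩, hmax⟩ :=
    exists_max_label n m ℓ (P := fun u => 3 ≤ u.1 ∧ u.1 + 1 ≤ n) h3 ⟨le_rfl, by omega⟩
  by_cases hex : ∃ u ∈ Vnm n m, (3 ≤ u.1 ∧ u.1 + 1 ≤ n) ∧ u ≠ (n - 1, 0) ∧ ℓ u = ℓ y
  · right
    obtain ⟨u, hu, ⟨hu3, hun⟩, hub, hue⟩ := hex
    have hun2 : u.1 + 2 ≤ n := by
      by_contra h
      exact hub (C.eq_mk_zero hu (c := n - 1) (by omega) (by omega))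
    have hu2 := C.two_le_label hu hu3 (by omega)
    have := C.label_add_two_le_x hu hun2
    obtain ⟨w, hw, hwe⟩ := C.label_add_one_mem hu (by rw [mem_Sn]; omega) hu2
    have hw' : w.1 = 2 ∨ (3 ≤ w.1 ∧ w.1 + 1 ≤ n) ∨ w = (n, 0) ∨ w = (n + 2, 0) := by
      rcases C.fst_cases hw with h | h | h | h | rfl | rfl | rfl | rfl <;> simp <;> omega
    rcases hw' with h | h | rfl | rfl
    · have := C.label_fst_two_eq_one hZ.1 hw h
      omega
    · have := hmax w hw h
      omega
    · -- `ℓ u + 2` is the largest label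
      have := hZ.1
      by_cases hu3n : u.1 + 3 ≤ n
      · have := C.label_add_lt_x hu hu3 hu3n (k := 2)
          (fun w hw hw3 => C.two_le_label hw (by omega) (by omega))
          (fun w hw hw5 _ => C.two_le_label hw (by omega) (by omega))
        omega
      · rw [← C.eq_mk_zero hu (c := n - 2) (by omega) (by omega)]
        omega
    · omega
  · left
    push Not at hex
    obtain rfl : y = (n - 1, 0) := by
      by_contra h
      exact hex y hy ⟨hy3, hyn⟩ h rfl
    intro u hu hux huz hub
    by_cases hu2 : u.1 = 2
    · have := C.label_fst_two_eq_one hZ.1 hu hu2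
      have := C.two_le_label hy (by omega) (by omega)
      omega
    have hPu : 3 ≤ u.1 ∧ u.1 + 1 ≤ n := by
      have := mem_Sn.1 hu.1
      have : u.1 ≠ n - 1 := fun h => hub (C.eq_mk_zero hu h (by omega))
      have : u.1 ≠ n := fun h => huz (C.eq_mk_zero hu h (by omega))
      have : u.1 ≠ n + 2 := fun h => hux (C.eq_mk_zero hu h (by omega))
      omega
    exact (hmax u hu hPu).lt_of_ne (hex u hu hPu hub)

/-! ### `b` carries the third largest label -/

theorem b_add_label_fst_three_of_thirdAtB (C : Counterexample n m ℓ v) (hT : ThirdAtB n m ℓ)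
    (hw : w ∈ Vnm n m) (hw3 : w.1 = 3) :
    ℓ (n - 1, 0) + ℓ w = ℓ (n, 0) ∨ ℓ (n - 1, 0) + ℓ w = ℓ (n + 2, 0) := by
  have := C.le_n
  have := C.one_le_label hw
  have := hT.le_b_or_eq (C.add_mem (C.mk_mem (c := n - 1) (by omega) (by omega)) hw
    (by rw [mem_Sn]; omega) (Prod.ne_of_fst_ne (by omega)))
  omega

theorem label_add_label_three_of_thirdAtB (C : Counterexample n m ℓ v) (hT : ThirdAtB n m ℓ)
    (hu : u ∈ Vnm n m) (hu4 : 4 ≤ u.1) (hun : u.1 + 3 ≤ n) :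
    ℓ u + ℓ (3, 0) ≤ ℓ (n - 1, 0) ∨ ℓ u + ℓ (3, 0) = ℓ (n, 0) := by
  have := C.le_n
  have h3 := C.mk_mem (c := 3) (by norm_num) (by omega)
  have := C.b_add_label_fst_three_of_thirdAtB hT h3 rfl
  have := C.label_lt_x (C.mk_mem (c := n) (by omega) le_rfl) (Prod.ne_of_fst_ne (by omega))
  have := hT u hu (Prod.ne_of_fst_ne (by omega)) (Prod.ne_of_fst_ne (by omega))
    (Prod.ne_of_fst_ne (by omega))
  have := hT.le_b_or_eq (C.add_mem hu h3 (by rw [mem_Sn]; omega) (Prod.ne_of_fst_ne (by omega)))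
  omega

theorem eq_d_or_of_thirdAtB (C : Counterexample n m ℓ v) (hZ : SecondAtZ n m ℓ)
    (hT : ThirdAtB n m ℓ) {t : ℕ} (ht : t ∈ ℓ '' Vnm n m) (hAt : ℓ (3, 0) < t)
    (hbt : ℓ (n - 1, 0) < t + ℓ (3, 0)) (htb : t < ℓ (n - 1, 0)) :
    t = ℓ (n - 2, 0) ∨ ℓ (n - 1, 0) + t = ℓ (n, 0) ∨ ℓ (n - 1, 0) + t = ℓ (n + 2, 0) ∨
      t + ℓ (3, 0) = ℓ (n, 0) := by
  have := C.le_n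
  have := hZ.2 _ (C.mk_mem (c := n - 1) (by omega) (by omega)) (Prod.ne_of_fst_ne (by omega))
  have := C.label_b_lt_x
  obtain ⟨w, hw, rfl⟩ := ht
  by_cases hw4 : 4 ≤ w.1 ∧ w.1 + 3 ≤ n
  · have := C.label_add_label_three_of_thirdAtB hT hw hw4.1 hw4.2
    omega
  rcases C.fst_cases hw with h | h | h | h | rfl | rfl | rfl | rfl
  · have := C.label_fst_two_eq_one hZ.1 hw h
    omega
  · have := C.b_add_label_fst_three_of_thirdAtB hT hw h
    omega
  all_goals omega

theorem false_of_thirdAtB_of_b_add_label_three_eq_z (C : Counterexample n m ℓ v)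
    (hZ : SecondAtZ n m ℓ) (hT : ThirdAtB n m ℓ) (hA : ℓ (n - 1, 0) + ℓ (3, 0) = ℓ (n, 0)) :
    False := by
  have := C.le_n
  have h30 := C.mk_mem (c := 3) (by norm_num) (by omega)
  have hbV := C.mk_mem (c := n - 1) (by omega) (by omega)
  have hzV := C.mk_mem (c := n) (by omega) le_rfl
  have hdV := C.mk_mem (c := n - 2) (by omega) (by omega)
  have := C.two_le_label h30 (by norm_num) (by omega)
  have := hZ.1
  have hmid : ∀ u ∈ Vnm n m, 4 ≤ u.1 → u.1 + 3 ≤ n →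
      2 ≤ ℓ u ∧ ℓ u + ℓ (3, 0) ≤ ℓ (n - 1, 0) ∧ ℓ u ≠ ℓ (3, 0) ∧ ℓ u ≠ ℓ (3, 0) + 1 := by
    intro u hu hu4 hun
    have := C.two_le_label hu (by omega) (by omega)
    have := C.label_add_label_three_of_thirdAtB hT hu hu4 hun
    have := hT u hu (Prod.ne_of_fst_ne (by omega)) (Prod.ne_of_fst_ne (by omega))
      (Prod.ne_of_fst_ne (by omega))
    have := C.add_ne_label hbV hu (by rw [mem_Sn]; omega) (Prod.ne_of_fst_ne (by omega)) hzV
    have := C.add_ne_label hbV hu (by rw [mem_Sn]; omega) (Prod.ne_of_fst_ne (by omega)) C.x_mem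
    omega
  have hcarr : ∀ k, 1 ≤ k → k < ℓ (3, 0) → ℓ (3, 0) + k < ℓ (n - 1, 0) →
      ℓ (n - 1, 0) - k = ℓ (3, 0) + 1 ∨ ℓ (n - 1, 0) - k = ℓ (n - 2, 0) := by
    intro k hk1 hkA hkb
    have ht : ℓ (n - 1, 0) - k ∈ ℓ '' Vnm n m := C.Icc_label_three_subset ⟨by omega, by omega⟩
    have := C.eq_d_or_of_thirdAtB hZ hT ht (by omega) (by omega) (by omega)
    omega
  by_cases hBA : ℓ (n - 1, 0) ≤ ℓ (3, 0) + 3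
  · obtain ⟨u, hu, hu5, hun, hu23⟩ := C.exists_mid_label_notMem (t := {2, 3}) (by decide)
    have := hmid u hu (by omega) hun
    simp only [Finset.mem_insert, Finset.mem_singleton] at hu23
    omega
  by_cases hA3 : 3 ≤ ℓ (3, 0)
  · have := hcarr 1 le_rfl (by omega) (by omega)
    have := hcarr 2 (by norm_num) (by omega) (by omega)
    omega
  -- `ℓ (3, 0) = 2`: the label `3` has no carrier
  have hd : ℓ (n - 2, 0) + 1 = ℓ (n - 1, 0) := by
    have := hcarr 1 le_rfl (by omega) (by omega)
    omega
  have hc3 : ∀ w ∈ Vnm n m, w.1 = 3 → ℓ w = 2 := by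
    intro w hw hw3
    have := C.b_add_label_fst_three_of_thirdAtB hT hw hw3
    have := C.add_ne_label hdV hw (by rw [mem_Sn]; omega) (Prod.ne_of_fst_ne (by omega)) hzV
    omega
  have h3 : 3 ∈ ℓ '' Vnm n m := C.Icc_label_three_subset ⟨by omega, by omega⟩
  obtain ⟨w, hw, hw3⟩ := h3
  rcases C.fst_cases hw with h | h | h | h | rfl | rfl | rfl | rfl
  · have := C.label_fst_two_eq_one hZ.1 hw h
    omega
  · have := hc3 w hw h
    omega
  · have := hmid w hw (by omega) (by omega)
    omega
  · have := hmid w hw (by omega) (by omega)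
    omega
  all_goals omega

theorem false_of_thirdAtB_of_label_three_eq_three (C : Counterexample n m ℓ v)
    (hZ : SecondAtZ n m ℓ) (hT : ThirdAtB n m ℓ) (hx : ℓ (n - 1, 0) + 3 = ℓ (n + 2, 0))
    (hA : ℓ (3, 0) = 3) (hd : ℓ (n - 2, 0) + 2 = ℓ (n - 1, 0)) (hb : 7 ≤ ℓ (n - 1, 0)) :
    False := by
  have := C.le_n
  have hbV := C.mk_mem (c := n - 1) (by omega) (by omega)
  have hzV := C.mk_mem (c := n) (by omega) le_rfl
  have hdV := C.mk_mem (c := n - 2) (by omega) (by omega)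
  have := hZ.1
  have hmid : ∀ u ∈ Vnm n m, 5 ≤ u.1 → u.1 + 3 ≤ n → 6 ≤ ℓ u := by
    intro u hu hu5 hun
    have := C.two_le_label hu (by omega) (by omega)
    have := C.add_ne_label hbV hu (by rw [mem_Sn]; omega) (Prod.ne_of_fst_ne (by omega)) hzV
    have := C.add_ne_label hbV hu (by rw [mem_Sn]; omega) (Prod.ne_of_fst_ne (by omega)) C.x_mem
    have := C.add_ne_label hdV hu (by rw [mem_Sn]; omega) (Prod.ne_of_fst_ne (by omega)) hzV
    have := C.add_ne_label hdV hu (by rw [mem_Sn]; omega) (Prod.ne_of_fst_ne (by omega)) C.x_mem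
    omega
  have hb1 : ℓ (n - 1, 0) - 1 ∈ ℓ '' Vnm n m := C.Icc_label_three_subset ⟨by omega, by omega⟩
  obtain ⟨u, hu, hue⟩ := hb1
  have hu5 : 5 ≤ u.1 ∧ u.1 + 3 ≤ n := by
    rcases C.fst_cases hu with h | h | h | h | rfl | rfl | rfl | rfl
    · have := C.label_fst_two_eq_one hZ.1 hu h
      omega
    · have := C.b_add_label_fst_three_of_thirdAtB hT hu h
      omega
    · have := hT.le_b_or_eq
        (C.add_mem hdV hu (by rw [mem_Sn]; omega) (Prod.ne_of_fst_ne (by omega)))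
      omega
    · exact h
    all_goals omega
  -- a neighbour of `u` in the same range pushes the sum of labels above the largest label
  obtain ⟨u', hu', hu'5, hu'n, hs, hne⟩ := C.exists_adj_mid (y := u) (by omega) hu5.2
  have := hmid u' hu' hu'5 hu'n
  have := C.le_label_x (C.add_mem hu hu' hs hne.symm)
  omega

theorem false_of_thirdAtB_of_b_add_label_three_eq_x (C : Counterexample n m ℓ v)
    (hZ : SecondAtZ n m ℓ) (hT : ThirdAtB n m ℓ) (hA : ℓ (n - 1, 0) + ℓ (3, 0) = ℓ (n + 2, 0)) :
    False := by
  have := C.le_n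
  have h30 := C.mk_mem (c := 3) (by norm_num) (by omega)
  have hzV := C.mk_mem (c := n) (by omega) le_rfl
  have hdV := C.mk_mem (c := n - 2) (by omega) (by omega)
  have := C.two_le_label h30 (by norm_num) (by omega)
  have := hZ.1
  have hA3 : 3 ≤ ℓ (3, 0) := by
    by_contra h
    exact C.label_b_add_one_notMem ⟨_, hzV, by omega⟩
  have := hT _ hdV (Prod.ne_of_fst_ne (by omega)) (Prod.ne_of_fst_ne (by omega))
    (Prod.ne_of_fst_ne (by omega))
  have := C.add_ne_label hdV h30 (by rw [mem_Sn]; omega) (Prod.ne_of_fst_ne (by omega)) hzV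
  have hcarr : ∀ k, 2 ≤ k → k < ℓ (3, 0) → ℓ (3, 0) + k < ℓ (n - 1, 0) →
      ℓ (n - 1, 0) - k = ℓ (n - 2, 0) := by
    intro k hk2 hkA hkb
    have ht : ℓ (n - 1, 0) - k ∈ ℓ '' Vnm n m := C.Icc_label_three_subset ⟨by omega, by omega⟩
    have := C.eq_d_or_of_thirdAtB hZ hT ht (by omega) (by omega) (by omega)
    omega
  by_cases hBA : ℓ (n - 1, 0) ≤ ℓ (3, 0) + 3
  · obtain ⟨u, hu, hu5, hun, hu23⟩ :=
      C.exists_mid_label_notMem (t := {2, 3, ℓ (n - 1, 0) - 1})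
        (Finset.card_le_three.trans (by norm_num))
    have := C.two_le_label hu (by omega) (by omega)
    have := C.label_add_label_three_of_thirdAtB hT hu (by omega) hun
    simp only [Finset.mem_insert, Finset.mem_singleton] at hu23
    omega
  by_cases hA4 : 4 ≤ ℓ (3, 0)
  · have := hcarr 2 le_rfl (by omega) (by omega)
    have := hcarr 3 (by norm_num) (by omega) (by omega)
    omega
  exact C.false_of_thirdAtB_of_label_three_eq_three hZ hT (by omega) (by omega)
    (by have := hcarr 2 le_rfl (by omega) (by omega); omega) (by omega)

theorem false_of_thirdAtB (C : Counterexample n m ℓ v) (hZ : SecondAtZ n m ℓ)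
    (hT : ThirdAtB n m ℓ) : False := by
  have := C.le_n
  rcases C.b_add_label_fst_three_of_thirdAtB hT (C.mk_mem (c := 3) (by norm_num) (by omega)) rfl
    with hA | hA
  · exact C.false_of_thirdAtB_of_b_add_label_three_eq_z hZ hT hA
  · exact C.false_of_thirdAtB_of_b_add_label_three_eq_x hZ hT hA

/-! ### `ℓ d + 2 = ℓ x` -/

theorem label_fst_four_of_d_add_two_eq_x (C : Counterexample n m ℓ v)
    (hd : ℓ (n - 2, 0) + 2 = ℓ (n + 2, 0)) (hu : u ∈ Vnm n m) (hu4 : u.1 = 4) : ℓ u = 2 := by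
  have := C.le_n
  have := C.two_le_label hu (by omega) (by omega)
  have := C.le_label_x (C.add_mem (C.mk_mem (c := n - 2) (by omega) (by omega)) hu
    (by rw [mem_Sn]; omega) (Prod.ne_of_fst_ne (by omega)))
  omega

theorem three_le_label_of_d_add_two_eq_x (C : Counterexample n m ℓ v)
    (hd : ℓ (n - 2, 0) + 2 = ℓ (n + 2, 0)) (hu : u ∈ Vnm n m) (hu3 : 3 ≤ u.1) (hun : u.1 ≤ n)
    (hu4 : u.1 ≠ 4) (hud : u.1 ≠ n - 2) : 3 ≤ ℓ u := by
  have := C.le_n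
  have := C.two_le_label hu hu3 hun
  have := C.add_ne_label (C.mk_mem (c := n - 2) (by omega) (by omega)) hu (by rw [mem_Sn]; omega)
    (Prod.ne_of_fst_ne (by omega)) C.x_mem
  omega

theorem label_lt_b_of_d_add_two_eq_x (C : Counterexample n m ℓ v) (hZ : SecondAtZ n m ℓ)
    (hd : ℓ (n - 2, 0) + 2 = ℓ (n + 2, 0)) (hu : u ∈ Vnm n m) (hu3 : 3 ≤ u.1)
    (hun : u.1 + 3 ≤ n) : ℓ u < ℓ (n - 1, 0) := by
  have := C.le_n
  have := hZ.1
  obtain ⟨y, hy, ⟨hy3, hyn⟩, hmax⟩ := exists_max_label n m ℓ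
    (P := fun u => 3 ≤ u.1 ∧ u.1 + 3 ≤ n) hu ⟨hu3, hun⟩
  refine (hmax u hu ⟨hu3, hun⟩).trans_lt ?_
  have := C.label_add_lt_x hy hy3 hyn (k := 3)
    (fun w hw hw3 => C.three_le_label_of_d_add_two_eq_x hd hw (by omega) (by omega) (by omega)
      (by omega))
    (fun w hw hw5 hwn => C.three_le_label_of_d_add_two_eq_x hd hw (by omega) (by omega) (by omega)
      (by omega))
  have hy2 := C.two_le_label hy hy3 (by omega)
  obtain ⟨w, hw, hwe⟩ := C.label_add_one_mem hy (by rw [mem_Sn]; omega) hy2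
  by_cases hw3 : 3 ≤ w.1 ∧ w.1 + 3 ≤ n
  · have := hmax w hw hw3
    omega
  rcases C.fst_cases hw with h | h | h | h | rfl | rfl | rfl | rfl
  · have := C.label_fst_two_eq_one hZ.1 hw h
    omega
  all_goals omega

theorem mem_labels_of_d_add_two_eq_x (C : Counterexample n m ℓ v) (hZ : SecondAtZ n m ℓ)
    (hd : ℓ (n - 2, 0) + 2 = ℓ (n + 2, 0)) {t : ℕ} (ht : t ∈ ℓ '' Vnm n m) :
    t ≤ ℓ (n - 1, 0) ∨ t + 2 = ℓ (n + 2, 0) ∨ t + 1 = ℓ (n + 2, 0) ∨ t = ℓ (n + 2, 0) := by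
  have := C.le_n
  have := hZ.1
  have := C.two_le_label (C.mk_mem (c := n - 1) (by omega) (by omega)) (by omega) (by omega)
  obtain ⟨w, hw, rfl⟩ := ht
  by_cases hw3 : 3 ≤ w.1 ∧ w.1 + 3 ≤ n
  · exact Or.inl (C.label_lt_b_of_d_add_two_eq_x hZ hd hw hw3.1 hw3.2).le
  rcases C.fst_cases hw with h | h | h | h | rfl | rfl | rfl | rfl
  · have := C.label_fst_two_eq_one hZ.1 hw h
    omega
  all_goals omega

theorem b_add_five_le_x_of_d_add_two_eq_x (C : Counterexample n m ℓ v) (hZ : SecondAtZ n m ℓ)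
    (hd : ℓ (n - 2, 0) + 2 = ℓ (n + 2, 0)) : ℓ (n - 1, 0) + 5 ≤ ℓ (n + 2, 0) := by
  have := C.le_n
  have hdV := C.mk_mem (c := n - 2) (by omega) (by omega)
  have h4V := C.mk_mem (c := 4) (by norm_num) (by omega)
  have := C.b_add_three_le_x_of_secondAtZ hZ
  have := C.label_fst_four_of_d_add_two_eq_x hd h4V rfl
  have : ℓ (n - 2, 0) ≠ ℓ (n - 1, 0) + 1 := fun h => C.label_b_add_one_notMem ⟨_, hdV, h⟩
  have := C.add_ne_label (C.mk_mem (c := n - 1) (by omega) (by omega)) h4V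
    (by rw [mem_Sn]; omega) (Prod.ne_of_fst_ne (by omega)) hdV
  omega

theorem b_add_label_fst_three_of_d_add_two_eq_x (C : Counterexample n m ℓ v)
    (hZ : SecondAtZ n m ℓ) (hd : ℓ (n - 2, 0) + 2 = ℓ (n + 2, 0)) (hw : w ∈ Vnm n m)
    (hw3 : w.1 = 3) :
    ℓ (n - 1, 0) + ℓ w + 2 = ℓ (n + 2, 0) ∨ ℓ (n - 1, 0) + ℓ w + 1 = ℓ (n + 2, 0) ∨
      ℓ (n - 1, 0) + ℓ w = ℓ (n + 2, 0) := by
  have := C.le_n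
  have := C.one_le_label hw
  have := C.mem_labels_of_d_add_two_eq_x hZ hd (C.add_mem (C.mk_mem (c := n - 1) (by omega)
    (by omega)) hw (by rw [mem_Sn]; omega) (Prod.ne_of_fst_ne (by omega)))
  omega

theorem label_add_label_three_of_d_add_two_eq_x (C : Counterexample n m ℓ v)
    (hZ : SecondAtZ n m ℓ) (hd : ℓ (n - 2, 0) + 2 = ℓ (n + 2, 0)) (hu : u ∈ Vnm n m)
    (hu4 : 4 ≤ u.1) (hun : u.1 + 3 ≤ n) :
    ℓ u + ℓ (3, 0) ≤ ℓ (n - 1, 0) ∨ ℓ u + ℓ (3, 0) + 2 = ℓ (n + 2, 0) ∨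
      ℓ u + ℓ (3, 0) + 1 = ℓ (n + 2, 0) := by
  have := C.le_n
  have h30 := C.mk_mem (c := 3) (by norm_num) (by omega)
  have := C.b_add_label_fst_three_of_d_add_two_eq_x hZ hd h30 rfl
  have := C.label_lt_b_of_d_add_two_eq_x hZ hd hu (by omega) hun
  have := C.mem_labels_of_d_add_two_eq_x hZ hd
    (C.add_mem hu h30 (by rw [mem_Sn]; omega) (Prod.ne_of_fst_ne (by omega)))
  omega

theorem false_of_d_add_two_eq_x_of_label_three_eq_three (C : Counterexample n m ℓ v)
    (hZ : SecondAtZ n m ℓ) (hd : ℓ (n - 2, 0) + 2 = ℓ (n + 2, 0)) (hA : ℓ (3, 0) = 3)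
    (hb : 7 ≤ ℓ (n - 1, 0)) : False := by
  have := C.le_n
  have hbV := C.mk_mem (c := n - 1) (by omega) (by omega)
  have hzV := C.mk_mem (c := n) (by omega) le_rfl
  have hdV := C.mk_mem (c := n - 2) (by omega) (by omega)
  have := hZ.1
  have := C.b_add_label_fst_three_of_d_add_two_eq_x hZ hd
    (C.mk_mem (c := 3) (by norm_num) (by omega)) rfl
  have := C.b_add_five_le_x_of_d_add_two_eq_x hZ hd
  have hx : ℓ (n + 2, 0) = ℓ (n - 1, 0) + 5 := by omega
  have hmid : ∀ u ∈ Vnm n m, 5 ≤ u.1 → u.1 + 3 ≤ n → 6 ≤ ℓ u ∧ ℓ u + 3 ≤ ℓ (n - 1, 0) := by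
    intro u hu hu5 hun
    have := C.three_le_label_of_d_add_two_eq_x hd hu (by omega) (by omega) (by omega) (by omega)
    have := C.label_add_label_three_of_d_add_two_eq_x hZ hd hu (by omega) hun
    have := C.label_lt_b_of_d_add_two_eq_x hZ hd hu (by omega) hun
    have := C.add_ne_label hbV hu (by rw [mem_Sn]; omega) (Prod.ne_of_fst_ne (by omega)) hdV
    have := C.add_ne_label hbV hu (by rw [mem_Sn]; omega) (Prod.ne_of_fst_ne (by omega)) hzV
    have := C.add_ne_label hbV hu (by rw [mem_Sn]; omega) (Prod.ne_of_fst_ne (by omega)) C.x_mem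
    omega
  have hb13 : 13 ≤ ℓ (n - 1, 0) := by
    by_contra h
    obtain ⟨u, hu, hu5, hun, hu6⟩ := C.exists_mid_label_notMem (t := Finset.Icc 6 9) (by simp)
    have := hmid u hu hu5 hun
    simp only [Finset.mem_Icc] at hu6
    omega
  have h5 : 5 ∈ ℓ '' Vnm n m := C.Icc_label_three_subset ⟨by omega, by omega⟩
  obtain ⟨w, hw, hw5⟩ := h5
  have hw3 : w.1 = 3 := by
    rcases C.fst_cases hw with h | h | h | h | rfl | rfl | rfl | rfl
    · have := C.label_fst_two_eq_one hZ.1 hw h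
      omega
    · exact h
    · have := C.label_fst_four_of_d_add_two_eq_x hd hw h
      omega
    · have := hmid w hw h.1 h.2
      omega
    all_goals omega
  have hmid5 : ∀ u ∈ Vnm n m, 5 ≤ u.1 → u.1 + 3 ≤ n → ℓ u + 5 ≤ ℓ (n - 1, 0) := by
    intro u hu hu5 hun
    have := hmid u hu hu5 hun
    have := C.mem_labels_of_d_add_two_eq_x hZ hd
      (C.add_mem hu hw (by rw [mem_Sn]; omega) (Prod.ne_of_fst_ne (by omega)))
    omega
  -- the label `ℓ (n - 1, 0) - 4` has no carrier
  have hb4 : ℓ (n - 1, 0) - 4 ∈ ℓ '' Vnm n m := C.Icc_label_three_subset ⟨by omega, by omega⟩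
  obtain ⟨u, hu, hue⟩ := hb4
  rcases C.fst_cases hu with h | h | h | h | rfl | rfl | rfl | rfl
  · have := C.label_fst_two_eq_one hZ.1 hu h
    omega
  · have := C.b_add_label_fst_three_of_d_add_two_eq_x hZ hd hu h
    omega
  · have := C.label_fst_four_of_d_add_two_eq_x hd hu h
    omega
  · have := hmid5 u hu h.1 h.2
    omega
  all_goals omega

theorem false_of_d_add_two_eq_x_of_four_le (C : Counterexample n m ℓ v) (hZ : SecondAtZ n m ℓ)
    (hd : ℓ (n - 2, 0) + 2 = ℓ (n + 2, 0)) (hA : 4 ≤ ℓ (3, 0))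
    (hb : ℓ (3, 0) + 4 ≤ ℓ (n - 1, 0)) : False := by
  have := C.le_n
  have := hZ.1
  have := C.b_add_label_fst_three_of_d_add_two_eq_x hZ hd
    (C.mk_mem (c := 3) (by norm_num) (by omega)) rfl
  have := C.b_add_five_le_x_of_d_add_two_eq_x hZ hd
  have hb3 : ℓ (n - 1, 0) - 3 ∈ ℓ '' Vnm n m := C.Icc_label_three_subset ⟨by omega, by omega⟩
  obtain ⟨w, hw, hwe⟩ := hb3
  have hw3 : w.1 = 3 := by
    rcases C.fst_cases hw with h | h | h | h | rfl | rfl | rfl | rfl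
    · have := C.label_fst_two_eq_one hZ.1 hw h
      omega
    · exact h
    · have := C.label_fst_four_of_d_add_two_eq_x hd hw h
      omega
    · have := C.label_add_label_three_of_d_add_two_eq_x hZ hd hw (by omega) h.2
      omega
    all_goals omega
  have := C.b_add_label_fst_three_of_d_add_two_eq_x hZ hd hw hw3
  obtain ⟨u, hu, hu5, hun, hu'⟩ := C.exists_mid_label_notMem
    (t := {3, ℓ (n + 2, 0) - ℓ w - 2, ℓ (n + 2, 0) - ℓ w - 1})
    (Finset.card_le_three.trans (by norm_num))
  have := C.three_le_label_of_d_add_two_eq_x hd hu (by omega) (by omega) (by omega) (by omega)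
  have := C.label_lt_b_of_d_add_two_eq_x hZ hd hu (by omega) hun
  have := C.mem_labels_of_d_add_two_eq_x hZ hd
    (C.add_mem hu hw (by rw [mem_Sn]; omega) (Prod.ne_of_fst_ne (by omega)))
  simp only [Finset.mem_insert, Finset.mem_singleton] at hu'
  omega

theorem false_of_d_add_two_eq_x (C : Counterexample n m ℓ v) (hZ : SecondAtZ n m ℓ)
    (hd : ℓ (n - 2, 0) + 2 = ℓ (n + 2, 0)) : False := by
  have := C.le_n
  have h30 := C.mk_mem (c := 3) (by norm_num) (by omega)
  have := C.three_le_label_of_d_add_two_eq_x hd h30 le_rfl (by omega) (by omega) (by omega)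
  have := C.b_add_label_fst_three_of_d_add_two_eq_x hZ hd h30 rfl
  have := C.b_add_five_le_x_of_d_add_two_eq_x hZ hd
  by_cases hBA : ℓ (n - 1, 0) ≤ ℓ (3, 0) + 3
  · obtain ⟨u, hu, hu5, hun, hu'⟩ := C.exists_mid_label_notMem
      (t := {3, ℓ (n + 2, 0) - ℓ (3, 0) - 2, ℓ (n + 2, 0) - ℓ (3, 0) - 1})
      (Finset.card_le_three.trans (by norm_num))
    have := C.three_le_label_of_d_add_two_eq_x hd hu (by omega) (by omega) (by omega) (by omega)
    have := C.label_add_label_three_of_d_add_two_eq_x hZ hd hu (by omega) hun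
    simp only [Finset.mem_insert, Finset.mem_singleton] at hu'
    omega
  by_cases hA3 : ℓ (3, 0) = 3
  · exact C.false_of_d_add_two_eq_x_of_label_three_eq_three hZ hd hA3 (by omega)
  · exact C.false_of_d_add_two_eq_x_of_four_le hZ hd (by omega) (by omega)

theorem false_of_secondAtZ (C : Counterexample n m ℓ v) (hZ : SecondAtZ n m ℓ) : False := by
  rcases C.thirdAtB_or_d_add_two_eq_x hZ with hT | hd
  · exact C.false_of_thirdAtB hZ hT
  · exact C.false_of_d_add_two_eq_x hZ hd

theorem false (C : Counterexample n m ℓ v) : False := by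
  rcases C.secondAtB_or_secondAtZ with hB | hZ
  · exact C.false_of_secondAtB hB
  · exact C.false_of_secondAtZ hZ

end Counterexample

/-- For `n ≥ 39`, any admissible `m`, and any sum labeling `ℓ` of `G(n,m)`,
no vertex of `ψ(2)` has label `1`. -/
theorem one_not_on_psi_two (n : ℕ) (hn : 39 ≤ n) (m : ℕ → ℕ)
    (hm : Admissible n m) (ℓ : ℕ × ℕ → ℕ) (hℓ : IsSumLabelingG n m ℓ)
    (v : ℕ × ℕ) (hv : v ∈ psi m 2) :
    ℓ v ≠ 1 := by
  obtain ⟨hv2, hvm⟩ := hv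
  have hvV : v ∈ Vnm n m := ⟨by rw [hv2, mem_Sn]; omega, by rwa [hv2]⟩
  exact fun hv1 => (Counterexample.mk hn hm hℓ hvV hv2 hv1).false
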